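/- For an irreducible, aperiodic, positive recurrent Markov chain on a countable state space with stationary distribution π, the n-step transition distributions converge in total variation: for every state x, lim_{n→∞} ‖P^n(x, ·) − π‖_TV = 0. -/

import Mathlib

open Filter
open scoped BigOperators Topology

/-- The `n`-step transition probabilities of a Markov kernel on a countable space. -/
noncomputable def nstep {S : Type*} [DecidableEq S] (P : S → S → ℝ) : ℕ → S → S → ℝ
  | 0 => fun i j => if i = j then 1 else 0
  | n + 1 => fun i j => ∑' k, nstep P n i k * P k j

/-!
Run two independent copies of the chain from `x` and `y` until they meet. The total variation
distance between `P^n(x, ·)` and `P^n(y, ·)` is at most the probability `u_n(x, y)` that they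
have not met by time `n`. The decreasing limit `u` of `u_n` is subharmonic for the product chain,
which has the everywhere positive stationary distribution `π ⊗ π`; integrating `P u - u ≥ 0`
against `π ⊗ π` gives zero, so `u` is harmonic, hence harmonic for every power of the product
chain. As `u` vanishes on the diagonal and aperiodicity makes `P^n(k, k) P^n(k, l) > 0` for some
`n`, `u(k, l) = 0`. Averaging the coupling bound over `y ∼ π` and dominated convergence finish.
-/

section Distributions

variable {α β ι : Type*}

structure IsDistrib (p : α → ℝ) : Prop where
  nonneg : ∀ a, 0 ≤ p a
  hasSum : HasSum p 1

def IsStochastic (Q : α → β → ℝ) : Prop := ∀ a, IsDistrib (Q a)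

variable {p : α → ℝ} {q : β → ℝ} {Q : α → β → ℝ} {f : α → ℝ} {C C' : ℝ}

namespace IsDistrib

theorem summable (hp : IsDistrib p) : Summable p := hp.hasSum.summable

theorem abs_le_one (hp : IsDistrib p) (a : α) : |p a| ≤ 1 := by
  rw [abs_of_nonneg (hp.nonneg a)]
  exact le_hasSum hp.hasSum a fun b _ => hp.nonneg b

theorem norm_mul_le (hp : IsDistrib p) (hf : ∀ a, |f a| ≤ C) (a : α) :
    ‖p a * f a‖ ≤ p a * C := by
  rw [Real.norm_eq_abs, abs_mul, abs_of_nonneg (hp.nonneg a)]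
  exact mul_le_mul_of_nonneg_left (hf a) (hp.nonneg a)

theorem summable_mul (hp : IsDistrib p) (hf : ∀ a, |f a| ≤ C) :
    Summable fun a => p a * f a :=
  (hp.summable.mul_right C).of_norm_bounded (hp.norm_mul_le hf)

theorem abs_tsum_mul_le (hp : IsDistrib p) (hf : ∀ a, |f a| ≤ C) :
    |∑' a, p a * f a| ≤ C := by
  simpa using tsum_of_norm_bounded (hp.hasSum.mul_right C) (hp.norm_mul_le hf)

theorem tsum_mul_le_tsum_mul (hp : IsDistrib p) {g : α → ℝ} (hf : ∀ a, 0 ≤ f a)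
    (hfg : ∀ a, f a ≤ g a) (hg : ∀ a, g a ≤ C) :
    ∑' a, p a * f a ≤ ∑' a, p a * g a := by
  have hfC a : |f a| ≤ C := (abs_of_nonneg (hf a)).trans_le ((hfg a).trans (hg a))
  have hgC a : |g a| ≤ C := (abs_of_nonneg ((hf a).trans (hfg a))).trans_le (hg a)
  exact (hp.summable_mul hfC).tsum_le_tsum
    (fun a => mul_le_mul_of_nonneg_left (hfg a) (hp.nonneg a)) (hp.summable_mul hgC)

theorem tendsto_tsum_mul {l : Filter ι} (hp : IsDistrib p) {F : ι → α → ℝ}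
    (hF : ∀ i a, |F i a| ≤ C) (hlim : ∀ a, Tendsto (F · a) l (𝓝 (f a))) :
    Tendsto (fun i => ∑' a, p a * F i a) l (𝓝 (∑' a, p a * f a)) :=
  tendsto_tsum_of_dominated_convergence (f := fun i a => p a * F i a) (g := fun a => p a * f a)
    (hp.summable.mul_right C)
    (fun a => (hlim a).const_mul (p a)) (Eventually.of_forall fun i => hp.norm_mul_le (hF i))

theorem summable_uncurry_mul (hp : IsDistrib p) (hQ : IsStochastic Q) :
    Summable fun z : α × β => p z.1 * Q z.1 z.2 := by
  refine (summable_prod_of_nonneg fun z => mul_nonneg (hp.nonneg _) ((hQ _).nonneg _)).2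
    ⟨fun a => (hQ a).summable.mul_left (p a), ?_⟩
  simpa only [tsum_mul_left, (hQ _).hasSum.tsum_eq, mul_one] using hp.summable

theorem tsum_bind_mul (hp : IsDistrib p) (hQ : IsStochastic Q) {g : β → ℝ}
    (hg : ∀ b, |g b| ≤ C) :
    ∑' b, (∑' a, p a * Q a b) * g b = ∑' a, p a * ∑' b, Q a b * g b := by
  have hsum : Summable fun z : α × β => p z.1 * Q z.1 z.2 * g z.2 :=
    ((hp.summable_uncurry_mul hQ).mul_right C).of_norm_bounded fun z => by
      rw [Real.norm_eq_abs, abs_mul, abs_of_nonneg (mul_nonneg (hp.nonneg _) ((hQ _).nonneg _))]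
      exact mul_le_mul_of_nonneg_left (hg _) (mul_nonneg (hp.nonneg _) ((hQ _).nonneg _))
  calc ∑' b, (∑' a, p a * Q a b) * g b = ∑' b, ∑' a, p a * Q a b * g b := by
        simp_rw [tsum_mul_right]
    _ = ∑' a, ∑' b, p a * Q a b * g b := hsum.tsum_comm
    _ = ∑' a, p a * ∑' b, Q a b * g b := by simp_rw [mul_assoc, tsum_mul_left]

theorem bind (hp : IsDistrib p) (hQ : IsStochastic Q) :
    IsDistrib fun b => ∑' a, p a * Q a b where
  nonneg b := tsum_nonneg fun a => mul_nonneg (hp.nonneg a) ((hQ a).nonneg b)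
  hasSum := by
    have h := hp.tsum_bind_mul hQ (g := fun _ => 1) (C := 1) fun _ => by simp
    simp only [mul_one, (hQ _).hasSum.tsum_eq, hp.hasSum.tsum_eq] at h
    exact h ▸ (hp.summable_uncurry_mul hQ).prod_symm.prod.hasSum

theorem prod (hp : IsDistrib p) (hq : IsDistrib q) : IsDistrib fun z : α × β => p z.1 * q z.2 where
  nonneg z := mul_nonneg (hp.nonneg z.1) (hq.nonneg z.2)
  hasSum := by
    simpa using hp.hasSum.mul hq.hasSum
      (summable_mul_of_summable_norm hp.summable.norm hq.summable.norm)

theorem tsum_prod_mul_mul (hp : IsDistrib p) (hq : IsDistrib q) {f : α → ℝ}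
    {g : β → ℝ} (hf : ∀ a, |f a| ≤ C) (hg : ∀ b, |g b| ≤ C') :
    ∑' z : α × β, p z.1 * q z.2 * (f z.1 * g z.2) = (∑' a, p a * f a) * ∑' b, q b * g b := by
  rw [tsum_mul_tsum_of_summable_norm (hp.summable_mul hf).norm (hq.summable_mul hg).norm]
  exact tsum_congr fun z => by ring

theorem tsum_prod_mul_sub (hp : IsDistrib p) (hq : IsDistrib q) {f : α → ℝ}
    {g : β → ℝ} (hf : ∀ a, |f a| ≤ C) (hg : ∀ b, |g b| ≤ C) :
    ∑' z : α × β, p z.1 * q z.2 * (f z.1 - g z.2) = ∑' a, p a * f a - ∑' b, q b * g b := by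
  have hfst := hp.tsum_prod_mul_mul hq hf (g := 1) (C' := 1) (by simp)
  have hsnd := hp.tsum_prod_mul_mul hq (f := 1) (C := 1) (by simp) hg
  simp only [Pi.one_apply, mul_one, one_mul, hp.hasSum.tsum_eq, hq.hasSum.tsum_eq] at hfst hsnd
  simp_rw [mul_sub]
  rw [Summable.tsum_sub ((hp.prod hq).summable_mul fun z => hf z.1)
    ((hp.prod hq).summable_mul fun z => hg z.2), hfst, hsnd]

theorem tsum_abs_tsum_mul_le {W : ι → ℝ} (hW : IsDistrib W)
    {h : ι → α → ℝ} (hs : ∀ i, Summable fun a => |h i a|) (hC : ∀ i, ∑' a, |h i a| ≤ C) :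
    ∑' a, |∑' i, W i * h i a| ≤ ∑' i, W i * ∑' a, |h i a| := by
  have hF : Summable fun z : ι × α => W z.1 * |h z.1 z.2| := by
    refine (summable_prod_of_nonneg fun z => mul_nonneg (hW.nonneg _) (abs_nonneg _)).2
      ⟨fun i => (hs i).mul_left (W i), ?_⟩
    simpa only [tsum_mul_left] using hW.summable_mul fun i =>
      (abs_of_nonneg (tsum_nonneg fun a => abs_nonneg (h i a))).trans_le (hC i)
  have hcol a : |∑' i, W i * h i a| ≤ ∑' i, W i * |h i a| := by
    have hnorm : Summable fun i => ‖W i * h i a‖ := by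
      simpa [abs_mul, abs_of_nonneg (hW.nonneg _)] using hF.prod_symm.prod_factor a
    simpa [abs_mul, abs_of_nonneg (hW.nonneg _)] using norm_tsum_le_tsum_norm hnorm
  calc ∑' a, |∑' i, W i * h i a| ≤ ∑' a, ∑' i, W i * |h i a| :=
        Summable.tsum_le_tsum hcol
          (hF.prod_symm.prod.of_nonneg_of_le (fun a => abs_nonneg _) hcol) hF.prod_symm.prod
    _ = ∑' i, ∑' a, W i * |h i a| := hF.tsum_comm
    _ = ∑' i, W i * ∑' a, |h i a| := by simp_rw [tsum_mul_left]

theorem summable_abs_sub (hp : IsDistrib p) {p' : α → ℝ} (hp' : IsDistrib p') :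
    Summable fun a => |p a - p' a| :=
  (hp.summable.add hp'.summable).of_nonneg_of_le (fun a => abs_nonneg _) fun a => by
    simpa [abs_of_nonneg (hp.nonneg a), abs_of_nonneg (hp'.nonneg a)] using abs_sub (p a) (p' a)

theorem tsum_abs_sub_le_two (hp : IsDistrib p) {p' : α → ℝ} (hp' : IsDistrib p') :
    ∑' a, |p a - p' a| ≤ 2 := by
  calc ∑' a, |p a - p' a| ≤ ∑' a, (p a + p' a) :=
        (hp.summable_abs_sub hp').tsum_le_tsum (fun a => by
          simpa [abs_of_nonneg (hp.nonneg a), abs_of_nonneg (hp'.nonneg a)] using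
            abs_sub (p a) (p' a))
          (hp.summable.add hp'.summable)
    _ = 2 := by
        rw [hp.summable.tsum_add hp'.summable, hp.hasSum.tsum_eq, hp'.hasSum.tsum_eq]
        norm_num

end IsDistrib

end Distributions

section Kernels

variable {T : Type*} {Q : T → T → ℝ} {h : T → ℝ} {C : ℝ}

def IsStationaryDist (μ : T → ℝ) (Q : T → T → ℝ) : Prop := ∀ w, ∑' z, μ z * Q z w = μ w

def IsHarmonic (Q : T → T → ℝ) (h : T → ℝ) : Prop := ∀ z, ∑' w, Q z w * h w = h z

theorem eq_zero_of_tsum_mul_eq_zero {ι : Type*} {p g : ι → ℝ} (hp : ∀ i, 0 ≤ p i)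
    (hg : ∀ i, 0 ≤ g i) (hsum : Summable fun i => p i * g i) (hzero : ∑' i, p i * g i = 0)
    {i : ι} (hpi : 0 < p i) : g i = 0 := by
  have := (hasSum_zero_iff_of_nonneg fun i => mul_nonneg (hp i) (hg i)).1 (hzero ▸ hsum.hasSum)
  exact (mul_eq_zero.1 (congrFun this i)).resolve_left hpi.ne'

theorem isHarmonic_of_le_tsum {μ : T → ℝ} (hQ : IsStochastic Q) (hμ : IsDistrib μ)
    (hstat : IsStationaryDist μ Q) (hμpos : ∀ z, 0 < μ z) (hh : ∀ z, |h z| ≤ C)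
    (hsub : ∀ z, h z ≤ ∑' w, Q z w * h w) : IsHarmonic Q h := by
  have hQh z : |∑' w, Q z w * h w| ≤ C := (hQ z).abs_tsum_mul_le hh
  have hgap : ∑' z, μ z * (∑' w, Q z w * h w - h z) = 0 := by
    simp_rw [mul_sub]
    rw [(hμ.summable_mul hQh).tsum_sub (hμ.summable_mul hh), ← hμ.tsum_bind_mul hQ hh]
    simp only [hstat _, sub_self]
  refine fun z => sub_eq_zero.1 (eq_zero_of_tsum_mul_eq_zero hμ.nonneg
    (fun z => sub_nonneg.2 (hsub z)) (hμ.summable_mul (C := C + C) fun z => ?_) hgap (hμpos z))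
  exact (abs_sub _ _).trans (add_le_add (hQh z) (hh z))

end Kernels

section Nstep

variable {T : Type*} [DecidableEq T] {Q : T → T → ℝ}

theorem isStochastic_nstep (hQ : IsStochastic Q) : ∀ n, IsStochastic (nstep Q n)
  | 0 => fun z => ⟨fun w => by simp only [nstep]; positivity,
      by simpa [nstep, eq_comm] using hasSum_ite_eq z (1 : ℝ)⟩
  | n + 1 => fun z => (isStochastic_nstep hQ n z).bind hQ

theorem nstep_add (hQ : IsStochastic Q) (a b : ℕ) (i j : T) :
    nstep Q (a + b) i j = ∑' k, nstep Q a i k * nstep Q b k j := by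
  induction b generalizing j with
  | zero => simp [nstep]
  | succ b ih =>
    calc nstep Q (a + b + 1) i j = ∑' m, (∑' k, nstep Q a i k * nstep Q b k m) * Q m j := by
          simp only [nstep, ih]
      _ = ∑' k, nstep Q a i k * nstep Q (b + 1) k j :=
          (isStochastic_nstep hQ a i).tsum_bind_mul (isStochastic_nstep hQ b) fun m =>
            (hQ m).abs_le_one j

theorem nstep_succ' (hQ : IsStochastic Q) (n : ℕ) (i j : T) :
    nstep Q (n + 1) i j = ∑' k, Q i k * nstep Q n k j := by
  rw [add_comm, nstep_add hQ]
  congr! 3 with k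
  simp [nstep]

theorem nstep_add_pos (hQ : IsStochastic Q) {a b : ℕ} {i k j : T}
    (ha : 0 < nstep Q a i k) (hb : 0 < nstep Q b k j) : 0 < nstep Q (a + b) i j := by
  have hsum := (isStochastic_nstep hQ a i).summable_mul fun k =>
    (isStochastic_nstep hQ b k).abs_le_one j
  rw [nstep_add hQ]
  refine (mul_pos ha hb).trans_le (hsum.le_tsum k fun k' _ => ?_)
  exact mul_nonneg ((isStochastic_nstep hQ a i).nonneg k') ((isStochastic_nstep hQ b k').nonneg j)

def returnTimes (hQ : IsStochastic Q) (i : T) : AddSubmonoid ℕ where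
  carrier := {n | 0 < nstep Q n i i}
  zero_mem' := by simp [nstep]
  add_mem' := nstep_add_pos hQ

theorem eventually_nstep_self_pos (hQ : IsStochastic Q) {i : T}
    (haper : ∀ d : ℕ, (∀ n : ℕ, 1 ≤ n → 0 < nstep Q n i i → d ∣ n) → d = 1) :
    ∀ᶠ n in atTop, 0 < nstep Q n i i := by
  have hgcd : Nat.setGcd (returnTimes hQ i) = 1 :=
    haper _ fun n _ hn => Nat.setGcd_dvd_of_mem hn
  obtain ⟨N, hN⟩ := Nat.exists_mem_closure_of_ge (returnTimes hQ i : Set ℕ)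
  rw [AddSubmonoid.closure_eq] at hN
  exact eventually_atTop.2 ⟨N, fun n hn => hN n hn (hgcd ▸ one_dvd n)⟩

theorem eventually_nstep_pos (hQ : IsStochastic Q) {i j : T}
    (hij : ∃ n, 0 < nstep Q n i j)
    (haper : ∀ d : ℕ, (∀ n : ℕ, 1 ≤ n → 0 < nstep Q n i i → d ∣ n) → d = 1) :
    ∀ᶠ n in atTop, 0 < nstep Q n i j := by
  obtain ⟨m, hm⟩ := hij
  filter_upwards [(tendsto_sub_atTop_nat m).eventually (eventually_nstep_self_pos hQ haper),
    eventually_ge_atTop m] with n hn hmn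
  simpa [Nat.sub_add_cancel hmn] using nstep_add_pos hQ hn hm

theorem isStationaryDist_nstep {μ : T → ℝ} (hμ : IsDistrib μ) (hQ : IsStochastic Q)
    (hstat : IsStationaryDist μ Q) : ∀ n, IsStationaryDist μ (nstep Q n)
  | 0 => fun w => by simp [nstep]
  | n + 1 => fun w => by
    calc ∑' z, μ z * nstep Q (n + 1) z w
        = ∑' k, (∑' z, μ z * nstep Q n z k) * Q k w :=
          (hμ.tsum_bind_mul (isStochastic_nstep hQ n) fun k => (hQ k).abs_le_one w).symm
      _ = μ w := by simp only [isStationaryDist_nstep hμ hQ hstat n _, hstat w]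

theorem IsStationaryDist.pos {μ : T → ℝ} (hμ : IsDistrib μ) (hQ : IsStochastic Q)
    (hstat : IsStationaryDist μ Q) (hirr : ∀ z w, ∃ n, 0 < nstep Q n z w) (w : T) : 0 < μ w := by
  obtain ⟨z, hz⟩ : ∃ z, 0 < μ z := by
    by_contra! h
    have : μ = 0 := funext fun z => le_antisymm (h z) (hμ.nonneg z)
    exact one_ne_zero (hμ.hasSum.unique (this ▸ hasSum_zero))
  obtain ⟨n, hn⟩ := hirr z w
  rw [← isStationaryDist_nstep hμ hQ hstat n w]
  refine (mul_pos hz hn).trans_le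
    ((hμ.summable_mul fun z' => (isStochastic_nstep hQ n z').abs_le_one w).le_tsum z fun z' _ => ?_)
  exact mul_nonneg (hμ.nonneg z') ((isStochastic_nstep hQ n z').nonneg w)

variable {h : T → ℝ} {C : ℝ}

theorem isHarmonic_nstep (hQ : IsStochastic Q) (hh : ∀ z, |h z| ≤ C) (harm : IsHarmonic Q h) :
    ∀ n, IsHarmonic (nstep Q n) h
  | 0 => fun z => by simp [nstep]
  | n + 1 => fun z => by
    calc ∑' w, nstep Q (n + 1) z w * h w = ∑' k, nstep Q n z k * ∑' w, Q k w * h w :=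
          (isStochastic_nstep hQ n z).tsum_bind_mul hQ hh
      _ = h z := by simp only [harm _, isHarmonic_nstep hQ hh harm n z]

theorem IsHarmonic.eq_zero_of_nstep_pos (hQ : IsStochastic Q) (hh : ∀ z, |h z| ≤ C)
    (hh0 : ∀ z, 0 ≤ h z) (harm : IsHarmonic Q h) {n : ℕ} {z w : T} (hz : h z = 0)
    (hzw : 0 < nstep Q n z w) : h w = 0 :=
  eq_zero_of_tsum_mul_eq_zero (isStochastic_nstep hQ n z).nonneg hh0
    ((isStochastic_nstep hQ n z).summable_mul hh) ((isHarmonic_nstep hQ hh harm n z).trans hz) hzw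

end Nstep

section Avoidance

theorem abs_le_one_of_mem_Icc {a : ℝ} (h : a ∈ Set.Icc 0 1) : |a| ≤ 1 :=
  (abs_of_nonneg h.1).trans_le h.2

variable {T : Type*} {Q : T → T → ℝ} {D : Set T} {z : T}

/-- The probability that the chain `Q` started at `z` stays outside `D` at times `0, …, n`. -/
noncomputable def avoidProb (Q : T → T → ℝ) (D : Set T) : ℕ → T → ℝ
  | 0 => Dᶜ.indicator 1
  | n + 1 => Dᶜ.indicator fun z => ∑' w, Q z w * avoidProb Q D n w

theorem avoidProb_of_mem (hz : z ∈ D) (n : ℕ) : avoidProb Q D n z = 0 := by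
  cases n <;> simp [avoidProb, hz]

theorem avoidProb_succ_of_notMem (hz : z ∉ D) (n : ℕ) :
    avoidProb Q D (n + 1) z = ∑' w, Q z w * avoidProb Q D n w := by
  simp [avoidProb, hz]

theorem avoidProb_mem_Icc (hQ : IsStochastic Q) (n : ℕ) (z : T) :
    avoidProb Q D n z ∈ Set.Icc 0 1 := by
  induction n generalizing z with
  | zero => by_cases hz : z ∈ D <;> simp [avoidProb, hz]
  | succ n ih =>
    by_cases hz : z ∈ D
    · simp [avoidProb_of_mem hz]
    rw [avoidProb_succ_of_notMem hz]
    exact ⟨tsum_nonneg fun w => mul_nonneg ((hQ z).nonneg w) (ih w).1,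
      (le_abs_self _).trans ((hQ z).abs_tsum_mul_le fun w => abs_le_one_of_mem_Icc (ih w))⟩

theorem avoidProb_succ_le (hQ : IsStochastic Q) :
    ∀ n z, avoidProb Q D (n + 1) z ≤ avoidProb Q D n z
  | n, z => by
    by_cases hz : z ∈ D
    · simp [avoidProb_of_mem hz]
    rw [avoidProb_succ_of_notMem hz]
    cases n with
    | zero =>
      simpa [avoidProb, hz, (hQ z).hasSum.tsum_eq] using (hQ z).tsum_mul_le_tsum_mul (g := 1)
        (fun w => (avoidProb_mem_Icc (D := D) hQ 0 w).1) (fun w => (avoidProb_mem_Icc hQ 0 w).2)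
        fun _ => le_rfl
    | succ n =>
      rw [avoidProb_succ_of_notMem hz]
      exact (hQ z).tsum_mul_le_tsum_mul (fun w => (avoidProb_mem_Icc hQ _ w).1)
        (avoidProb_succ_le hQ n) fun w => (avoidProb_mem_Icc hQ n w).2

noncomputable def avoidLim (Q : T → T → ℝ) (D : Set T) (z : T) : ℝ := ⨅ n, avoidProb Q D n z

theorem tendsto_avoidProb (hQ : IsStochastic Q) (z : T) :
    Tendsto (avoidProb Q D · z) atTop (𝓝 (avoidLim Q D z)) :=
  tendsto_atTop_ciInf (antitone_nat_of_succ_le fun n => avoidProb_succ_le hQ n z)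
    ⟨0, fun _ ⟨n, hn⟩ => hn ▸ (avoidProb_mem_Icc hQ n z).1⟩

theorem avoidLim_mem_Icc (hQ : IsStochastic Q) (z : T) : avoidLim Q D z ∈ Set.Icc 0 1 :=
  isClosed_Icc.mem_of_tendsto (tendsto_avoidProb hQ z)
    (Eventually.of_forall fun n => avoidProb_mem_Icc hQ n z)

theorem avoidLim_of_mem (hz : z ∈ D) : avoidLim Q D z = 0 := by
  simp [avoidLim, avoidProb_of_mem hz]

theorem avoidLim_le_tsum (hQ : IsStochastic Q) (z : T) :
    avoidLim Q D z ≤ ∑' w, Q z w * avoidLim Q D w := by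
  by_cases hz : z ∈ D
  · rw [avoidLim_of_mem hz]
    exact tsum_nonneg fun w => mul_nonneg ((hQ z).nonneg w) (avoidLim_mem_Icc hQ w).1
  refine (tendsto_nhds_unique ((tendsto_avoidProb hQ z).comp (tendsto_add_atTop_nat 1)) ?_).le
  simp_rw [Function.comp_def, avoidProb_succ_of_notMem hz]
  exact (hQ z).tendsto_tsum_mul (fun n w => abs_le_one_of_mem_Icc (avoidProb_mem_Icc hQ n w))
    (tendsto_avoidProb hQ)

end Avoidance

section ProductChain

variable {α β : Type*}

def prodKernel (P : α → α → ℝ) (Q : β → β → ℝ) (z w : α × β) : ℝ := P z.1 w.1 * Q z.2 w.2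

variable {P : α → α → ℝ} {Q : β → β → ℝ}

theorem IsStochastic.prodKernel (hP : IsStochastic P) (hQ : IsStochastic Q) :
    IsStochastic (prodKernel P Q) :=
  fun z => (hP z.1).prod (hQ z.2)

theorem IsStationaryDist.prodKernel {μ : α → ℝ} {ν : β → ℝ} (hμ : IsDistrib μ) (hν : IsDistrib ν)
    (hP : IsStochastic P) (hQ : IsStochastic Q) (hμP : IsStationaryDist μ P)
    (hνQ : IsStationaryDist ν Q) :
    IsStationaryDist (fun z => μ z.1 * ν z.2) (prodKernel P Q) := fun w =>
  (hμ.tsum_prod_mul_mul hν (fun a => (hP a).abs_le_one w.1) fun b => (hQ b).abs_le_one w.2).trans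
    (by rw [hμP w.1, hνQ w.2])

theorem nstep_prodKernel [DecidableEq α] [DecidableEq β] (hP : IsStochastic P)
    (hQ : IsStochastic Q) :
    ∀ n z w, nstep (prodKernel P Q) n z w = nstep P n z.1 w.1 * nstep Q n z.2 w.2
  | 0, z, w => by
    by_cases h₁ : z.1 = w.1 <;> by_cases h₂ : z.2 = w.2 <;> simp [nstep, Prod.ext_iff, h₁, h₂]
  | n + 1, z, w => by
    simp only [nstep, nstep_prodKernel hP hQ n]
    exact (isStochastic_nstep hP n z.1).tsum_prod_mul_mul (isStochastic_nstep hQ n z.2)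
      (fun a => (hP a).abs_le_one w.1) (fun b => (hQ b).abs_le_one w.2)

end ProductChain

section Coupling

variable {S : Type*} [DecidableEq S] {P : S → S → ℝ}

theorem nstep_succ_sub (hP : IsStochastic P) (n : ℕ) (x y j : S) :
    nstep P (n + 1) x j - nstep P (n + 1) y j =
      ∑' z : S × S, prodKernel P P (x, y) z * (nstep P n z.1 j - nstep P n z.2 j) := by
  rw [nstep_succ' hP, nstep_succ' hP]
  exact ((hP x).tsum_prod_mul_sub (hP y) (fun k => (isStochastic_nstep hP n k).abs_le_one j)
    fun l => (isStochastic_nstep hP n l).abs_le_one j).symm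

theorem tsum_abs_nstep_sub_le_avoidProb (hP : IsStochastic P) (n : ℕ) (x y : S) :
    ∑' j, |nstep P n x j - nstep P n y j| ≤
      2 * avoidProb (prodKernel P P) (Set.diagonal S) n (x, y) := by
  induction n generalizing x y with
  | zero =>
    by_cases hxy : x = y
    · simp [hxy, avoidProb_of_mem (Set.mem_diagonal y)]
    · simpa [avoidProb, hxy] using
        (isStochastic_nstep hP 0 x).tsum_abs_sub_le_two (isStochastic_nstep hP 0 y)
  | succ n ih =>
    by_cases hxy : x = y
    · simp [hxy, avoidProb_of_mem (Set.mem_diagonal y)]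
    have hW := hP.prodKernel hP (x, y)
    rw [avoidProb_succ_of_notMem (show (x, y) ∉ Set.diagonal S from hxy)]
    simp_rw [nstep_succ_sub hP]
    calc _ ≤ ∑' z, prodKernel P P (x, y) z * ∑' j, |nstep P n z.1 j - nstep P n z.2 j| :=
          hW.tsum_abs_tsum_mul_le
            (fun z => (isStochastic_nstep hP n z.1).summable_abs_sub (isStochastic_nstep hP n z.2))
            fun z => (isStochastic_nstep hP n z.1).tsum_abs_sub_le_two (isStochastic_nstep hP n z.2)
      _ ≤ ∑' z, prodKernel P P (x, y) z * (2 * avoidProb (prodKernel P P) (Set.diagonal S) n z) :=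
          hW.tsum_mul_le_tsum_mul (C := 2) (fun z => tsum_nonneg fun j => abs_nonneg _)
            (fun z => ih z.1 z.2) fun z => by
              linarith [(avoidProb_mem_Icc (D := Set.diagonal S) (hP.prodKernel hP) n z).2]
      _ = _ := by simp_rw [mul_left_comm _ (2 : ℝ), tsum_mul_left]

theorem tsum_abs_nstep_sub_le_tsum_avoidProb (hP : IsStochastic P) {π : S → ℝ}
    (hπ : IsDistrib π) (hstat : IsStationaryDist π P) (n : ℕ) (x : S) :
    ∑' j, |nstep P n x j - π j| ≤
      2 * ∑' y, π y * avoidProb (prodKernel P P) (Set.diagonal S) n (x, y) := by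
  have hmix j : nstep P n x j - π j = ∑' y, π y * (nstep P n x j - nstep P n y j) := by
    simp_rw [mul_sub]
    rw [(hπ.summable.mul_right _).tsum_sub
        (hπ.summable_mul fun y => (isStochastic_nstep hP n y).abs_le_one j),
      tsum_mul_right, hπ.hasSum.tsum_eq, one_mul, isStationaryDist_nstep hπ hP hstat n j]
  simp_rw [hmix]
  calc _ ≤ ∑' y, π y * ∑' j, |nstep P n x j - nstep P n y j| :=
        hπ.tsum_abs_tsum_mul_le
          (fun y => (isStochastic_nstep hP n x).summable_abs_sub (isStochastic_nstep hP n y))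
          fun y => (isStochastic_nstep hP n x).tsum_abs_sub_le_two (isStochastic_nstep hP n y)
    _ ≤ ∑' y, π y * (2 * avoidProb (prodKernel P P) (Set.diagonal S) n (x, y)) :=
        hπ.tsum_mul_le_tsum_mul (C := 2) (fun y => tsum_nonneg fun j => abs_nonneg _)
          (tsum_abs_nstep_sub_le_avoidProb hP n x) fun y => by
            linarith [(avoidProb_mem_Icc (D := Set.diagonal S) (hP.prodKernel hP) n (x, y)).2]
    _ = _ := by simp_rw [mul_left_comm _ (2 : ℝ), tsum_mul_left]

theorem avoidLim_diagonal_eq_zero (hP : IsStochastic P)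
    (hpos : ∀ i j, ∀ᶠ n in atTop, 0 < nstep P n i j) {π : S → ℝ} (hπ : IsDistrib π)
    (hstat : IsStationaryDist π P) (z : S × S) :
    avoidLim (prodKernel P P) (Set.diagonal S) z = 0 := by
  have hPP := hP.prodKernel hP
  have hπpos := IsStationaryDist.pos hπ hP hstat fun i j => (hpos i j).exists
  have hbound w := abs_le_one_of_mem_Icc (avoidLim_mem_Icc (D := Set.diagonal S) hPP w)
  have harm : IsHarmonic (prodKernel P P) (avoidLim (prodKernel P P) (Set.diagonal S)) :=
    isHarmonic_of_le_tsum hPP (hπ.prod hπ) (hstat.prodKernel hπ hπ hP hP hstat)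
      (fun w => mul_pos (hπpos w.1) (hπpos w.2)) hbound (avoidLim_le_tsum hPP)
  obtain ⟨n, hdiag, hoff⟩ := ((hpos z.1 z.1).and (hpos z.1 z.2)).exists
  refine harm.eq_zero_of_nstep_pos hPP hbound (fun w => (avoidLim_mem_Icc hPP w).1)
    (z := (z.1, z.1)) (avoidLim_of_mem rfl) (n := n) ?_
  rw [nstep_prodKernel hP hP]
  exact mul_pos hdiag hoff

end Coupling

theorem convergence_to_stationary_general
    {S : Type*} [DecidableEq S] (P : S → S → ℝ)
    (hPnn : ∀ i j, 0 ≤ P i j)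
    (hstoch : ∀ i, HasSum (P i) 1)
    (hirr : ∀ i j : S, ∃ n : ℕ, 1 ≤ n ∧ 0 < nstep P n i j)
    (haper : ∀ i : S, ∀ d : ℕ,
      (∀ n : ℕ, 1 ≤ n → 0 < nstep P n i i → d ∣ n) → d = 1)
    (π : S → ℝ) (hπ0 : ∀ i, 0 ≤ π i) (hπ1 : HasSum π 1)
    (hstat : ∀ j, ∑' i, π i * P i j = π j) :
    ∀ x : S,
      Tendsto (fun n => (∑' j, |nstep P n x j - π j|) / 2) atTop (𝓝 0) := by
  intro x
  have hP : IsStochastic P := fun i => ⟨hPnn i, hstoch i⟩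
  have hπ : IsDistrib π := ⟨hπ0, hπ1⟩
  have hpos i j : ∀ᶠ n in atTop, 0 < nstep P n i j :=
    eventually_nstep_pos hP ((hirr i j).imp fun _ => And.right) (haper i)
  have hPP := hP.prodKernel hP
  have hcoupled : Tendsto
      (fun n => ∑' y, π y * avoidProb (prodKernel P P) (Set.diagonal S) n (x, y)) atTop (𝓝 0) := by
    simpa [avoidLim_diagonal_eq_zero hP hpos hπ hstat] using
      hπ.tendsto_tsum_mul (fun n y => abs_le_one_of_mem_Icc (avoidProb_mem_Icc hPP n (x, y)))
        fun y => tendsto_avoidProb (D := Set.diagonal S) hPP (x, y)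
  refine squeeze_zero (fun n => by positivity) (fun n => ?_) hcoupled
  linarith [tsum_abs_nstep_sub_le_tsum_avoidProb hP hπ hstat n x]

/-- Convergence theorem for Markov chains: for an irreducible, aperiodic Markov
chain on a countable state space admitting a stationary probability distribution
`π` (hence positive recurrent), the `n`-step transition distributions converge
to `π` in total variation from every starting state. -/
theorem convergence_to_stationary
    {S : Type*} [Countable S] [DecidableEq S] (P : S → S → ℝ)
    (hPnn : ∀ i j, 0 ≤ P i j)
    (hstoch : ∀ i, HasSum (P i) 1)
    (hirr : ∀ i j : S, ∃ n : ℕ, 1 ≤ n ∧ 0 < nstep P n i j)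
    (haper : ∀ i : S, ∀ d : ℕ,
      (∀ n : ℕ, 1 ≤ n → 0 < nstep P n i i → d ∣ n) → d = 1)
    (π : S → ℝ) (hπ0 : ∀ i, 0 ≤ π i) (hπ1 : HasSum π 1)
    (hstat : ∀ j, ∑' i, π i * P i j = π j) :
    ∀ x : S,
      Tendsto (fun n => (∑' j, |nstep P n x j - π j|) / 2) atTop (𝓝 0) :=
  convergence_to_stationary_general P hPnn hstoch hirr haper π hπ0 hπ1 hstat
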